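/- arXiv:2306.09240 — 2 statements merged into one kernel-verified Lean document; each statement's English description precedes it below -/
import Mathlib

section
/- Let P = (X,≺) be a finite poset with n elements and z₁ ≺ z₂ ≺ z₃ distinct. Suppose F(k,ℓ+2) = F(k+2,ℓ) = 0 and F(k,ℓ)·F(k+1,ℓ+1) > 0. Then F(k,ℓ+1)·F(k+1,ℓ) = F(k+1,ℓ+1)·F(k,ℓ). -/
/-!
Fix a linear extension `L` with gaps `(k + 1, l + 1)`. If some element placed strictly between
`z₁` and `z₂` were not below `z₂`, raising the highest such element to the place of `z₂` would
give gaps `(k, l + 2)`, which `F(k, l + 2) = 0` forbids. An element incomparable to `z₂` and placed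
below it therefore sits below `z₁`, and raising the highest one to the place of `z₂` gives gaps
`(k + 1, l + 2)` while keeping all `k` elements between `z₁` and `z₂` below `z₂`. Since
`F(k, l) > 0`, fewer than `k` elements lie strictly between `z₁` and `z₂` in the order, so one of
them is not above `z₁`; lowering it to the place of `z₁` gives gaps `(k, l + 2)` again. The case
of an element placed above `z₂` is the same argument in the dual order, using `F(k + 2, l) = 0`.

Hence `z₂` is comparable to every element, every linear extension puts `z₂` at the same place,
and exchanging the parts below `z₂` of two linear extensions is a bijection proving
`F(a, b) F(c, d) = F(c, b) F(a, d)`.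
-/

/-- The number of linear extensions `L` of a finite poset `X`
(order-preserving bijections `X ≃ Fin (card X)`) such that
`L z₂ − L z₁ = k` and `L z₃ − L z₂ = l`. -/
noncomputable def F (X : Type) [PartialOrder X] [Fintype X] (z₁ z₂ z₃ : X) (k l : ℕ) : ℕ :=
  Nat.card {L : X ≃ Fin (Fintype.card X) // (∀ a b : X, a < b → L a < L b) ∧
    (L z₂ : ℕ) = (L z₁ : ℕ) + k ∧ (L z₃ : ℕ) = (L z₂ : ℕ) + l}

lemma Fin.val_cycleIcc {n : ℕ} {i j : Fin n} (hij : i ≤ j) (k : Fin n) :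
    (Fin.cycleIcc i j k : ℕ) =
      if (k : ℕ) = j then (i : ℕ) else if (i : ℕ) ≤ k ∧ (k : ℕ) < j then (k : ℕ) + 1 else k := by
  have : NeZero n := ⟨by omega⟩
  rw [Fin.le_def] at hij
  rcases lt_or_ge k i with hki | hik
  · rw [Fin.cycleIcc_of_lt hki]
    rw [Fin.lt_def] at hki
    split_ifs <;> omega
  rcases lt_or_ge j k with hjk | hkj
  · rw [Fin.cycleIcc_of_gt hjk]
    rw [Fin.lt_def] at hjk
    split_ifs <;> omega
  rw [Fin.cycleIcc_of_le_of_le hik hkj]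
  rw [Fin.le_def] at hik hkj
  split_ifs with h₁ <;> simp only [Fin.ext_iff] at h₁ ⊢ <;> try omega
  exact Fin.val_add_one_of_lt' (by omega)

lemma Fin.val_cycleIcc_symm {n : ℕ} {i j : Fin n} (hij : i ≤ j) (k : Fin n) :
    ((Fin.cycleIcc i j).symm k : ℕ) =
      if (k : ℕ) = i then (j : ℕ) else if (i : ℕ) < k ∧ (k : ℕ) ≤ j then (k : ℕ) - 1 else k := by
  have h := Fin.val_cycleIcc hij ((Fin.cycleIcc i j).symm k)
  rw [Equiv.apply_symm_apply] at h
  have := Fin.le_def.1 hij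
  split_ifs at h ⊢ <;> omega

section Moves

variable {X : Type} [PartialOrder X] [Fintype X] {L : X ≃ Fin (Fintype.card X)}

lemma strictMono_trans_cycleIcc_symm (hL : StrictMono L) {b : X} {q : Fin (Fintype.card X)}
    (hbq : L b ≤ q) (h : ∀ w, L b < L w → L w ≤ q → ¬ b < w) :
    StrictMono (L.trans (Fin.cycleIcc (L b) q).symm) := by
  intro u v huv
  have hu := Fin.val_cycleIcc_symm hbq (L u)
  have hv := Fin.val_cycleIcc_symm hbq (L v)
  have := hL huv
  simp only [Equiv.trans_apply, Fin.lt_def]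
  rcases eq_or_ne u b with rfl | hub
  · have : q < L v := not_le.1 fun hvq => h v this hvq huv
    split_ifs at hu hv <;> omega
  · have : (L u : ℕ) ≠ L b := fun e => hub (L.injective (Fin.ext e))
    split_ifs at hu hv <;> omega

lemma strictMono_trans_cycleIcc (hL : StrictMono L) {c : X} {p : Fin (Fintype.card X)}
    (hpc : p ≤ L c) (h : ∀ w, p ≤ L w → L w < L c → ¬ w < c) :
    StrictMono (L.trans (Fin.cycleIcc p (L c))) := by
  intro u v huv
  have hu := Fin.val_cycleIcc hpc (L u)
  have hv := Fin.val_cycleIcc hpc (L v)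
  have := hL huv
  simp only [Equiv.trans_apply, Fin.lt_def]
  rcases eq_or_ne v c with rfl | hvc
  · have : L u < p := not_le.1 fun hpu => h u hpu this huv
    split_ifs at hu hv <;> omega
  · have : (L v : ℕ) ≠ L c := fun e => hvc (L.injective (Fin.ext e))
    split_ifs at hu hv <;> omega

lemma exists_strictMono_move_up (hL : StrictMono L) {y v : X} (hyv : L y < L v) (hy : ¬ y < v) :
    ∃ b, L y ≤ L b ∧ L b < L v ∧ ¬ b < v ∧ ∃ L' : X ≃ Fin (Fintype.card X), StrictMono L' ∧
      ∀ w, (L' w : ℕ) = if (L w : ℕ) = L b then (L v : ℕ)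
        else if (L b : ℕ) < L w ∧ (L w : ℕ) ≤ L v then (L w : ℕ) - 1 else L w := by
  classical
  -- The highest such `b` can be moved: everything placed between `b` and `v` is below `v`.
  obtain ⟨b, hb, hmax⟩ := Finset.exists_max_image {w | L w < L v ∧ ¬ w < v} L
    ⟨y, by simp [hyv, hy]⟩
  simp only [Finset.mem_filter, Finset.mem_univ, true_and, and_imp] at hb hmax
  refine ⟨b, hmax y hyv hy, hb.1, hb.2, _, strictMono_trans_cycleIcc_symm hL hb.1.le ?_,
    fun w => Fin.val_cycleIcc_symm hb.1.le (L w)⟩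
  intro w hbw hwv hbw'
  rcases hwv.lt_or_eq with hwv | hwv
  · exact (hmax w hwv fun hw => hb.2 (hbw'.trans hw)).not_gt hbw
  · exact hb.2 (L.injective hwv ▸ hbw')

lemma exists_strictMono_move_down (hL : StrictMono L) {u y : X} (huy : L u < L y)
    (hy : ¬ u < y) :
    ∃ c, L u < L c ∧ L c ≤ L y ∧ ∃ L' : X ≃ Fin (Fintype.card X), StrictMono L' ∧
      ∀ w, (L' w : ℕ) = if (L w : ℕ) = L c then (L u : ℕ)
        else if (L u : ℕ) ≤ L w ∧ (L w : ℕ) < L c then (L w : ℕ) + 1 else L w := by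
  classical
  obtain ⟨c, hc, hmin⟩ := Finset.exists_min_image {w | L u < L w ∧ ¬ u < w} L
    ⟨y, by simp [huy, hy]⟩
  simp only [Finset.mem_filter, Finset.mem_univ, true_and, and_imp] at hc hmin
  refine ⟨c, hc.1, hmin y huy hy, _, strictMono_trans_cycleIcc hL hc.1.le ?_,
    fun w => Fin.val_cycleIcc hc.1.le (L w)⟩
  intro w huw hwc hwc'
  rcases huw.lt_or_eq with huw | huw
  · exact (hmin w huw fun hw => hc.2 (hw.trans hwc')).not_gt hwc
  · exact hc.2 (L.injective huw ▸ hwc')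

lemma exists_notMem_Ioo_of_sub_lt {M : X ≃ Fin (Fintype.card X)} (hM : StrictMono M) {u v : X}
    (huv : u < v) (h : (M v : ℕ) - M u < L v - L u) :
    ∃ y, L u < L y ∧ L y < L v ∧ y ∉ Set.Ioo u v := by
  classical
  by_contra! H
  have h₁ : (Finset.Ioo (L u) (L v)).card ≤ ({y | u < y ∧ y < v} : Finset X).card :=
    Finset.card_le_card_of_injOn L.symm
      (fun j hj => by
        simp only [Finset.coe_Ioo, Set.mem_Ioo] at hj
        simpa using H (L.symm j) (by simpa using hj.1) (by simpa using hj.2))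
      L.symm.injective.injOn
  have h₂ : ({y | u < y ∧ y < v} : Finset X).card ≤ (Finset.Ioo (M u) (M v)).card :=
    Finset.card_le_card_of_injOn M
      (fun y hy => by
        simp only [Finset.coe_filter, Finset.mem_univ, true_and, Set.mem_ofPred_eq] at hy
        simpa using ⟨hM hy.1, hM hy.2⟩)
      M.injective.injOn
  rw [Fin.card_Ioo] at h₁ h₂
  have := hM huv
  omega

end Moves

section OrderDual

variable {X : Type} [Fintype X]

def reverseExt : (X ≃ Fin (Fintype.card X)) ≃ (Xᵒᵈ ≃ Fin (Fintype.card Xᵒᵈ)) :=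
  Equiv.equivCongr OrderDual.toDual Fin.revPerm

lemma val_reverseExt_apply (L : X ≃ Fin (Fintype.card X)) (x : X) :
    (reverseExt L (OrderDual.toDual x) : ℕ) = Fintype.card X - (L x + 1) :=
  Fin.val_rev (L x)

lemma strictMono_reverseExt_iff [PartialOrder X] {L : X ≃ Fin (Fintype.card X)} :
    StrictMono (reverseExt L) ↔ StrictMono L := by
  refine ⟨fun h a b hab => ?_, fun h a b hab => ?_⟩
  · exact Fin.rev_lt_rev.1 (h (OrderDual.toDual_lt_toDual.2 hab))
  · exact Fin.rev_lt_rev.2 (h (OrderDual.ofDual_lt_ofDual.2 hab))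

end OrderDual

section Comparable

variable {X : Type} [PartialOrder X] [Fintype X] {z₁ z₂ z₃ : X} {k l : ℕ}
  {L : X ≃ Fin (Fintype.card X)}

lemma F_pos_iff : 0 < F X z₁ z₂ z₃ k l ↔ ∃ L : X ≃ Fin (Fintype.card X), StrictMono L ∧
    (L z₂ : ℕ) = L z₁ + k ∧ (L z₃ : ℕ) = L z₂ + l := by
  rw [F, Nat.card_pos_iff, nonempty_subtype]
  exact ⟨fun h => h.1, fun h => ⟨h, inferInstance⟩⟩

lemma F_orderDual :
    F Xᵒᵈ (OrderDual.toDual z₃) (OrderDual.toDual z₂) (OrderDual.toDual z₁) l k =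
      F X z₁ z₂ z₃ k l := by
  refine Nat.card_congr (reverseExt.subtypeEquiv fun L => ?_).symm
  refine and_congr strictMono_reverseExt_iff.symm ?_
  simp only [val_reverseExt_apply]
  have := (L z₁).isLt
  have := (L z₂).isLt
  have := (L z₃).isLt
  omega

lemma lt_of_apply_between (h1 : F X z₁ z₂ z₃ k (l + 2) = 0) (hL : StrictMono L)
    (e₁ : (L z₂ : ℕ) = L z₁ + (k + 1)) (e₂ : (L z₃ : ℕ) = L z₂ + (l + 1)) {y : X}
    (h₁y : L z₁ < L y) (hy₂ : L y < L z₂) : y < z₂ := by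
  by_contra hy
  obtain ⟨b, hyb, hbz, -, L', hL', hpos⟩ := exists_strictMono_move_up hL hy₂ hy
  have p₁ : (L' z₁ : ℕ) = L z₁ := by rw [hpos]; split_ifs <;> omega
  have p₂ : (L' z₂ : ℕ) = L z₂ - 1 := by rw [hpos]; split_ifs <;> omega
  have p₃ : (L' z₃ : ℕ) = L z₃ := by rw [hpos]; split_ifs <;> omega
  exact (F_pos_iff.2 ⟨L', hL', by omega, by omega⟩).ne' h1

lemma lt_of_apply_lt (h12 : z₁ < z₂) (h1 : F X z₁ z₂ z₃ k (l + 2) = 0)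
    (hkl : 0 < F X z₁ z₂ z₃ k l) (hL : StrictMono L)
    (e₁ : (L z₂ : ℕ) = L z₁ + (k + 1)) (e₂ : (L z₃ : ℕ) = L z₂ + (l + 1)) {x : X}
    (hx : L x < L z₂) : x < z₂ := by
  by_contra hx'
  obtain ⟨b, -, hbz, hb, L', hL', hpos⟩ := exists_strictMono_move_up hL hx hx'
  have hbz₁ : L b < L z₁ := by
    refine lt_of_le_of_ne (not_lt.1 fun h => hb (lt_of_apply_between h1 hL e₁ e₂ h hbz)) ?_
    exact fun e => hb (L.injective e ▸ h12)
  have p₁ : (L' z₁ : ℕ) = L z₁ - 1 := by rw [hpos]; split_ifs <;> omega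
  have p₂ : (L' z₂ : ℕ) = L z₂ - 1 := by rw [hpos]; split_ifs <;> omega
  have p₃ : (L' z₃ : ℕ) = L z₃ := by rw [hpos]; split_ifs <;> omega
  obtain ⟨M, hM, f₁, -⟩ := F_pos_iff.1 hkl
  obtain ⟨y, h₁y, hy₂, hy⟩ := exists_notMem_Ioo_of_sub_lt (L := L') hM h12 (by omega)
  have py := hpos y
  have hy₁ : ¬ z₁ < y := fun h => hy ⟨h, lt_of_apply_between h1 hL e₁ e₂
    (by split_ifs at py <;> omega) (by split_ifs at py <;> omega)⟩
  obtain ⟨c, h₁c, hcy, L'', hL'', hpos'⟩ := exists_strictMono_move_down hL' h₁y hy₁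
  have q₁ : (L'' z₁ : ℕ) = L' z₁ + 1 := by rw [hpos']; split_ifs <;> omega
  have q₂ : (L'' z₂ : ℕ) = L' z₂ := by rw [hpos']; split_ifs <;> omega
  have q₃ : (L'' z₃ : ℕ) = L' z₃ := by rw [hpos']; split_ifs <;> omega
  exact (F_pos_iff.2 ⟨L'', hL'', by omega, by omega⟩).ne' h1

theorem symmGen_le_of_F (h12 : z₁ < z₂) (h23 : z₂ < z₃) (h1 : F X z₁ z₂ z₃ k (l + 2) = 0)
    (h2 : F X z₁ z₂ z₃ (k + 2) l = 0) (hkl : 0 < F X z₁ z₂ z₃ k l)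
    (hk1 : 0 < F X z₁ z₂ z₃ (k + 1) (l + 1)) (x : X) : Relation.SymmGen (· ≤ ·) x z₂ := by
  obtain ⟨L, hL, e₁, e₂⟩ := F_pos_iff.1 hk1
  rcases lt_trichotomy (L x) (L z₂) with h | h | h
  · exact .of_rel (lt_of_apply_lt h12 h1 hkl hL e₁ e₂ h).le
  · exact .of_rel (L.injective h).le
  · refine .of_rel_symm (lt_of_apply_lt (z₁ := OrderDual.toDual z₃)
      (z₂ := OrderDual.toDual z₂) (z₃ := OrderDual.toDual z₁) (L := reverseExt L)
      (x := OrderDual.toDual x) (OrderDual.toDual_lt_toDual.2 h23) (by rwa [F_orderDual])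
      (by rwa [F_orderDual]) (strictMono_reverseExt_iff.2 hL) ?_ ?_ ?_).le
    all_goals
      simp only [val_reverseExt_apply, Fin.lt_def] at h ⊢
      have := (L z₁).isLt
      have := (L z₂).isLt
      have := (L z₃).isLt
      omega

end Comparable

section Splice

open scoped Classical

variable {X : Type} [PartialOrder X] [Fintype X] {z : X}

lemma apply_lt_apply_iff_of_symmGen (hz : ∀ x, Relation.SymmGen (· ≤ ·) x z)
    {L : X ≃ Fin (Fintype.card X)} (hL : StrictMono L) {x : X} : L x < L z ↔ x < z := by
  refine ⟨fun h => ?_, fun h => hL h⟩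
  rcases hz x with hxz | hzx
  · exact hxz.lt_of_ne fun e => h.ne (e ▸ rfl)
  · exact absurd (hL.monotone hzx) h.not_ge

lemma val_apply_eq_card_lt_of_symmGen (hz : ∀ x, Relation.SymmGen (· ≤ ·) x z)
    {L : X ≃ Fin (Fintype.card X)} (hL : StrictMono L) :
    (L z : ℕ) = ({x | x < z} : Finset X).card := by
  rw [← Fin.card_Iio, Finset.card_equiv L fun x => ?_]
  simp [apply_lt_apply_iff_of_symmGen hz hL]

abbrev LinExt (X : Type) [PartialOrder X] [Fintype X] : Type :=
  {L : X ≃ Fin (Fintype.card X) // StrictMono L}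

namespace LinExt

lemma apply_eq_apply (hz : ∀ x, Relation.SymmGen (· ≤ ·) x z) (P Q : LinExt X) :
    P.1 z = Q.1 z :=
  Fin.ext ((val_apply_eq_card_lt_of_symmGen hz P.2).trans
    (val_apply_eq_card_lt_of_symmGen hz Q.2).symm)

lemma ite_lt_iff (hz : ∀ x, Relation.SymmGen (· ≤ ·) x z) (P Q : LinExt X) (x : X) :
    (if x < z then P.1 x else Q.1 x) < Q.1 z ↔ x < z := by
  by_cases hx : x < z
  · simpa [hx, apply_eq_apply hz P Q] using P.2 hx
  · simpa [hx] using (apply_lt_apply_iff_of_symmGen hz Q.2 (x := x)).not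

lemma injective_ite (hz : ∀ x, Relation.SymmGen (· ≤ ·) x z) (P Q : LinExt X) :
    Function.Injective fun x => if x < z then P.1 x else Q.1 x := by
  intro u v huv
  have huv' : u < z ↔ v < z := by
    rw [← ite_lt_iff hz P Q u, ← ite_lt_iff hz P Q v]
    exact iff_of_eq (congrArg (· < Q.1 z) huv)
  by_cases hu : u < z
  · simp only [hu, huv'.1 hu, if_true] at huv
    exact P.1.injective huv
  · simp only [hu, mt huv'.2 hu, if_false] at huv
    exact Q.1.injective huv

lemma strictMono_ite (hz : ∀ x, Relation.SymmGen (· ≤ ·) x z) (P Q : LinExt X) :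
    StrictMono fun x => if x < z then P.1 x else Q.1 x := by
  intro u v huv
  by_cases hv : v < z
  · simpa [hv, huv.trans hv] using P.2 huv
  by_cases hu : u < z
  · exact ((ite_lt_iff hz P Q u).2 hu).trans_le (not_lt.1 (mt (ite_lt_iff hz P Q v).1 hv))
  · simpa [hu, hv] using Q.2 huv

noncomputable def splice (hz : ∀ x, Relation.SymmGen (· ≤ ·) x z) (P Q : LinExt X) :
    LinExt X :=
  ⟨Equiv.ofBijective _ ((Fintype.bijective_iff_injective_and_card _).2
    ⟨injective_ite hz P Q, (Fintype.card_fin _).symm⟩), strictMono_ite hz P Q⟩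

lemma splice_apply (hz : ∀ x, Relation.SymmGen (· ≤ ·) x z) (P Q : LinExt X) (x : X) :
    (splice hz P Q).1 x = if x < z then P.1 x else Q.1 x :=
  rfl

lemma splice_self (hz : ∀ x, Relation.SymmGen (· ≤ ·) x z) (P : LinExt X) :
    splice hz P P = P :=
  Subtype.ext (Equiv.ext fun x => by simp [splice_apply])

lemma splice_splice (hz : ∀ x, Relation.SymmGen (· ≤ ·) x z) (P Q R S : LinExt X) :
    splice hz (splice hz P Q) (splice hz R S) = splice hz P S :=
  Subtype.ext (Equiv.ext fun x => by by_cases hx : x < z <;> simp [splice_apply, hx])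

def withGaps (z₁ z₂ z₃ : X) (k l : ℕ) : Set (LinExt X) :=
  {L | (L.1 z₂ : ℕ) = L.1 z₁ + k ∧ (L.1 z₃ : ℕ) = L.1 z₂ + l}

lemma F_eq_card_withGaps (z₁ z₂ z₃ : X) (k l : ℕ) :
    F X z₁ z₂ z₃ k l = Nat.card (withGaps z₁ z₂ z₃ k l) :=
  Nat.card_congr (Equiv.subtypeSubtypeEquivSubtypeInter _ _).symm

lemma splice_mem_withGaps (hz : ∀ x, Relation.SymmGen (· ≤ ·) x z) {z₁ z₃ : X} (h1 : z₁ < z)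
    (h3 : z < z₃) {a b c d : ℕ} {P Q : LinExt X} (hP : P ∈ withGaps z₁ z z₃ a c)
    (hQ : Q ∈ withGaps z₁ z z₃ d b) : splice hz P Q ∈ withGaps z₁ z z₃ a b := by
  simp only [withGaps, Set.mem_ofPred_eq, splice_apply, h1, lt_irrefl, h3.not_gt, if_true,
    if_false] at hP hQ ⊢
  exact ⟨apply_eq_apply hz P Q ▸ hP.1, hQ.2⟩

noncomputable def swapLowerEquiv (hz : ∀ x, Relation.SymmGen (· ≤ ·) x z) {z₁ z₃ : X}
    (h1 : z₁ < z) (h3 : z < z₃) (a b c d : ℕ) :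
    withGaps z₁ z z₃ a b × withGaps z₁ z z₃ c d ≃ withGaps z₁ z z₃ c b × withGaps z₁ z z₃ a d where
  toFun p := (⟨splice hz p.2 p.1, splice_mem_withGaps hz h1 h3 p.2.2 p.1.2⟩,
    ⟨splice hz p.1 p.2, splice_mem_withGaps hz h1 h3 p.1.2 p.2.2⟩)
  invFun p := (⟨splice hz p.2 p.1, splice_mem_withGaps hz h1 h3 p.2.2 p.1.2⟩,
    ⟨splice hz p.1 p.2, splice_mem_withGaps hz h1 h3 p.1.2 p.2.2⟩)
  left_inv p := by ext <;> simp [splice_splice, splice_self]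
  right_inv p := by ext <;> simp [splice_splice, splice_self]

end LinExt

end Splice

theorem F_mul_F_eq_swap {X : Type} [PartialOrder X] [Fintype X] {z₁ z₂ z₃ : X}
    (hz : ∀ x, Relation.SymmGen (· ≤ ·) x z₂) (h12 : z₁ < z₂) (h23 : z₂ < z₃) (a b c d : ℕ) :
    F X z₁ z₂ z₃ a b * F X z₁ z₂ z₃ c d = F X z₁ z₂ z₃ c b * F X z₁ z₂ z₃ a d := by
  simp only [LinExt.F_eq_card_withGaps, ← Nat.card_prod]
  exact Nat.card_congr (LinExt.swapLowerEquiv hz h12 h23 a b c d)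

theorem cross_product_equality_vanishing_case_general (X : Type) [PartialOrder X] [Fintype X]
    (z₁ z₂ z₃ : X) (h12 : z₁ < z₂) (h23 : z₂ < z₃)
    (k l : ℕ)
    (h1 : F X z₁ z₂ z₃ k (l + 2) = 0) (h2 : F X z₁ z₂ z₃ (k + 2) l = 0)
    (h3 : 0 < F X z₁ z₂ z₃ k l * F X z₁ z₂ z₃ (k + 1) (l + 1)) :
    F X z₁ z₂ z₃ k (l + 1) * F X z₁ z₂ z₃ (k + 1) l =
      F X z₁ z₂ z₃ (k + 1) (l + 1) * F X z₁ z₂ z₃ k l := by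
  obtain ⟨hkl, hk1⟩ := CanonicallyOrderedAdd.mul_pos.1 h3
  exact F_mul_F_eq_swap (symmGen_le_of_F h12 h23 h1 h2 hkl hk1) h12 h23 _ _ _ _

theorem cross_product_equality_vanishing_case (X : Type) [PartialOrder X] [Fintype X]
    (z₁ z₂ z₃ : X) (h12 : z₁ < z₂) (h23 : z₂ < z₃)
    (k l : ℕ) (hk : 1 ≤ k) (hl : 1 ≤ l)
    (h1 : F X z₁ z₂ z₃ k (l + 2) = 0) (h2 : F X z₁ z₂ z₃ (k + 2) l = 0)
    (h3 : 0 < F X z₁ z₂ z₃ k l * F X z₁ z₂ z₃ (k + 1) (l + 1)) :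
    F X z₁ z₂ z₃ k (l + 1) * F X z₁ z₂ z₃ (k + 1) l =
      F X z₁ z₂ z₃ (k + 1) (l + 1) * F X z₁ z₂ z₃ k l :=
  cross_product_equality_vanishing_case_general X z₁ z₂ z₃ h12 h23 k l h1 h2 h3
end

section
/- Let P = (X,≺) be a finite poset with n elements and a ∈ X. Define t(a) as the maximum over y incomparable to a of the number of elements z ≼ a with z incomparable to y (and t(a) = 1 if a is comparable to everything), and t*(a) dually. Let N_k be the number of linear extensions L with L(a) = k. Then N_k ≤ t(a)·N_{k−1} whenever N_{k−1} > 0, and N_k ≤ t*(a)·N_{k+1} whenever N_{k+1} > 0. -/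
/-- The number of linear extensions `L` of a finite poset `X`
(order-preserving bijections `X ≃ Fin (card X)`, positions taken in `{1, …, n}`)
with `L a = j`. -/
noncomputable def NE (X : Type) [PartialOrder X] [Fintype X] (a : X) (j : ℕ) : ℕ :=
  Nat.card {L : X ≃ Fin (Fintype.card X) // (∀ p q : X, p < q → L p < L q) ∧
    (L a : ℕ) + 1 = j}

open scoped Classical

/-- The parameter `t(a)`: the maximum, over `y` incomparable to `a`, of the number of
elements `z ≼ a` incomparable to `y`; equal to `1` if `a` is comparable to everything. -/
noncomputable def tpar (X : Type) [PartialOrder X] [Fintype X] (a : X) : ℕ :=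
  if ∃ y : X, ¬(y ≤ a ∨ a ≤ y) then
    (Finset.univ.filter fun y : X => ¬(y ≤ a ∨ a ≤ y)).sup
      (fun y => Nat.card {z : X // ¬(z ≤ y ∨ y ≤ z) ∧ z ≤ a})
  else 1

/-- The dual parameter `t*(a)`. -/
noncomputable def tstar (X : Type) [PartialOrder X] [Fintype X] (a : X) : ℕ :=
  if ∃ y : X, ¬(y ≤ a ∨ a ≤ y) then
    (Finset.univ.filter fun y : X => ¬(y ≤ a ∨ a ≤ y)).sup
      (fun y => Nat.card {z : X // ¬(z ≤ y ∨ y ≤ z) ∧ a ≤ z})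
  else 1

/-!
Take a linear extension `L` with `L a = m` and assume some extension puts `a` at position
`m - 1`; then fewer than `m` elements lie below `a`, so some element before `a` is incomparable
to `a`. Let `y` be the last one. Everything strictly between `y` and `a` lies below `a`, hence is
incomparable to `y` (as is `a`), so moving `y` to the position of `a` and shifting that block
down by one gives a linear extension with `a` at position `m - 1`. The block lies in `U(a, y)`,
so the distance `m - L y` is at most `t(a)`, and `L` is recovered from the new extension and this
distance. The bound with `t*(a)` is the same bound for the dual order.
-/

open Finset Equiv

namespace Fin

variable {n : ℕ}

theorem val_cycleIcc_symm_apply {i m : Fin n} (him : i ≤ m) (p : Fin n) :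
    ((cycleIcc i m).symm p : ℕ) =
      if p = i then (m : ℕ) else if i < p ∧ p ≤ m then (p : ℕ) - 1 else p := by
  have : NeZero n := ⟨by omega⟩
  split_ifs with hpi hp
  · subst hpi
    rw [(symm_apply_eq _).mpr (cycleIcc_of_last him).symm]
  · obtain ⟨hip, hpm⟩ := hp
    rw [lt_def] at hip
    rw [le_def] at hpm
    set q : Fin n := ⟨p - 1, by omega⟩
    have hqv : (q : ℕ) = p - 1 := rfl
    have hq : q + 1 = p := Fin.ext (by rw [val_add_one_of_lt' (by omega)]; omega)
    have hσq : cycleIcc i m q = q + 1 :=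
      cycleIcc_of_ge_of_lt (le_def.mpr (by omega)) (lt_def.mpr (by omega))
    rw [(symm_apply_eq _).mpr (hσq.trans hq).symm]
  · rw [(symm_apply_eq _).mpr ?_]
    rcases lt_or_gt_of_ne hpi with h | h
    · exact (cycleIcc_of_lt h).symm
    · exact (cycleIcc_of_gt (not_le.mp fun hpm => hp ⟨h, hpm⟩)).symm

theorem val_cycleIcc_symm_apply_right {i m : Fin n} (him : i < m) :
    ((cycleIcc i m).symm m : ℕ) = m - 1 := by
  rw [val_cycleIcc_symm_apply him.le, if_neg him.ne', if_pos ⟨him, le_rfl⟩]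

end Fin

theorem Equiv.card_filter_apply_mem {α β : Type*} [Fintype α] [DecidableEq β] (e : α ≃ β)
    (s : Finset β) : #{x | e x ∈ s} = #s :=
  card_equiv e (by simp)

section

variable {X : Type} [PartialOrder X] {n : ℕ}

theorem StrictMono.trans_cycleIcc_symm {L : X ≃ Fin n} (hL : StrictMono L) {y : X} {m : Fin n}
    (hym : L y ≤ m) (hy : ∀ z, L y < L z → L z ≤ m → ¬y < z) :
    StrictMono (L.trans (Fin.cycleIcc (L y) m).symm) := by
  intro p q hpq
  have hLpq := hL hpq
  simp only [Equiv.trans_apply, Fin.lt_def, Fin.val_cycleIcc_symm_apply hym]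
  by_cases hp : p = y
  · subst hp
    have : m < L q := not_le.mp fun h => hy q hLpq h hpq
    split_ifs <;> omega
  · have : L p ≠ L y := L.injective.ne hp
    split_ifs <;> omega

variable [Fintype X]

theorem StrictMono.card_lt_le {L : X ≃ Fin n} (hL : StrictMono L) (a : X) :
    #{z | z < a} ≤ L a := by
  calc #{z | z < a} ≤ #{z | L z ∈ Iio (L a)} := card_le_card fun z => by simpa using @hL z a
    _ = L a := by rw [L.card_filter_apply_mem, Fin.card_Iio]

theorem StrictMono.exists_incomparable_before {L : X ≃ Fin n} (hL : StrictMono L) {a : X}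
    (ha : #{z | z < a} < L a) : ∃ y, ¬(y ≤ a ∨ a ≤ y) ∧ L y < L a := by
  by_contra! h
  have hsub : ({z | L z ∈ Iio (L a)} : Finset X) ⊆ ({z | z < a} : Finset X) := by
    intro z hz
    simp only [mem_filter, mem_univ, true_and, mem_Iio] at hz ⊢
    have haz : ¬a ≤ z := fun h => (hL.monotone h).not_gt hz
    have hza : z ≤ a := by_contra fun h' => (h z ⟨h', haz⟩).not_gt hz
    exact hza.lt_of_ne (by rintro rfl; exact lt_irrefl _ hz)
  have := card_le_card hsub
  rw [L.card_filter_apply_mem, Fin.card_Iio] at this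
  omega

theorem StrictMono.exists_last_incomparable_before {L : X ≃ Fin n} (hL : StrictMono L) {a : X}
    (ha : #{z | z < a} < L a) :
    ∃ y, ¬(y ≤ a ∨ a ≤ y) ∧ L y < L a ∧ ∀ z, L y < L z → L z ≤ L a → z ≤ a := by
  obtain ⟨y, hy, hmax⟩ := exists_max_image ({y | ¬(y ≤ a ∨ a ≤ y) ∧ L y < L a} : Finset X) L
    (by simpa [Finset.Nonempty] using hL.exists_incomparable_before ha)
  simp only [mem_filter, mem_univ, true_and] at hy hmax
  refine ⟨y, hy.1, hy.2, fun z hyz hza => ?_⟩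
  rcases hza.lt_or_eq with hza | hza
  · by_contra hz
    have : ¬(z ≤ a ∨ a ≤ z) := fun h => h.elim hz fun h => (hL.monotone h).not_gt hza
    exact (hmax z ⟨this, hza⟩).not_gt hyz
  · exact (L.injective hza).le

theorem card_incomparable_le_tpar {a y : X} (hya : ¬(y ≤ a ∨ a ≤ y)) :
    Nat.card {z : X // ¬(z ≤ y ∨ y ≤ z) ∧ z ≤ a} ≤ tpar X a := by
  rw [tpar, if_pos ⟨y, hya⟩]
  exact le_sup (f := fun y => Nat.card {z : X // ¬(z ≤ y ∨ y ≤ z) ∧ z ≤ a}) (by simpa using hya)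

theorem StrictMono.sub_le_tpar {L : X ≃ Fin n} (hL : StrictMono L) {a y : X}
    (hya : ¬(y ≤ a ∨ a ≤ y)) (hy : ∀ z, L y < L z → L z ≤ L a → z ≤ a) :
    (L a : ℕ) - L y ≤ tpar X a := by
  have hU : ∀ z, L z ∈ Ioc (L y) (L a) → ¬(z ≤ y ∨ y ≤ z) ∧ z ≤ a := by
    intro z hz
    rw [mem_Ioc] at hz
    have hza := hy z hz.1 hz.2
    exact ⟨fun h => h.elim (fun h => (hL.monotone h).not_gt hz.1)
      (fun h => hya (.inl (h.trans hza))), hza⟩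
  calc (L a : ℕ) - L y = #{z | L z ∈ Ioc (L y) (L a)} := by
        rw [L.card_filter_apply_mem, Fin.card_Ioc]
    _ ≤ Nat.card {z : X // ¬(z ≤ y ∨ y ≤ z) ∧ z ≤ a} := by
        rw [Nat.card_eq_fintype_card, Fintype.card_subtype]
        refine card_le_card fun z hz => ?_
        simp only [mem_filter, mem_univ, true_and] at hz ⊢
        exact hU z hz
    _ ≤ tpar X a := card_incomparable_le_tpar hya

theorem StrictMono.exists_slide {L : X ≃ Fin n} (hL : StrictMono L) {a : X}
    (ha : #{z | z < a} < L a) :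
    ∃ i < L a, (L a : ℕ) - i ≤ tpar X a ∧ StrictMono (L.trans (Fin.cycleIcc i (L a)).symm) := by
  obtain ⟨y, hya, hyL, hy⟩ := hL.exists_last_incomparable_before ha
  exact ⟨L y, hyL, hL.sub_le_tpar hya hy, hL.trans_cycleIcc_symm hyL.le
    fun z h₁ h₂ hyz => hya (.inl (hyz.le.trans (hy z h₁ h₂)))⟩

abbrev LinExtAt (X : Type) [PartialOrder X] [Fintype X] (a : X) (j : ℕ) : Type :=
  {L : X ≃ Fin (Fintype.card X) // StrictMono L ∧ (L a : ℕ) + 1 = j}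

theorem NE_eq_card_linExtAt (a : X) (j : ℕ) : NE X a j = Nat.card (LinExtAt X a j) := rfl

theorem NE_zero (a : X) : NE X a 0 = 0 :=
  Nat.card_eq_zero.mpr <| .inl ⟨fun L => by have := L.2.2; omega⟩

theorem NE_eq_zero_of_card_lt (a : X) {j : ℕ} (hj : Fintype.card X < j) : NE X a j = 0 :=
  Nat.card_eq_zero.mpr <| .inl ⟨fun L => by have := L.2.2; have := (L.1 a).isLt; omega⟩

theorem NE_succ_le_tpar_mul (a : X) (m : ℕ) (hm : 0 < NE X a m) :
    NE X a (m + 1) ≤ tpar X a * NE X a m := by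
  rw [NE_eq_card_linExtAt] at hm ⊢
  obtain ⟨L₀, hL₀, hL₀a⟩ := (Nat.card_pos_iff.mp hm).1.some
  have hcard : #{z | z < a} < m := by have := hL₀.card_lt_le a; omega
  obtain hmn | hmn := le_or_gt (Fintype.card X) m
  · rw [← NE_eq_card_linExtAt, NE_eq_zero_of_card_lt a (by omega)]
    exact Nat.zero_le _
  let M : Fin (Fintype.card X) := ⟨m, hmn⟩
  -- `r : Fin (tpar X a)` records that the slid element came from position `m - 1 - r`.
  let unslide : LinExtAt X a m × Fin (tpar X a) → X ≃ Fin (Fintype.card X) :=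
    fun q => q.1.1.trans (Fin.cycleIcc ⟨m - 1 - q.2, by omega⟩ M)
  have hsurj : ∀ L : LinExtAt X a (m + 1), ∃ q, unslide q = L := by
    rintro ⟨L, hL, hLa⟩
    have hLaM : L a = M := Fin.ext (show (L a : ℕ) = m by omega)
    obtain ⟨i, hiL, hit, hslide⟩ := hL.exists_slide (a := a) (by omega)
    rw [hLaM] at hiL hit hslide
    refine ⟨(⟨_, hslide, ?_⟩, ⟨m - 1 - i, by omega⟩), ?_⟩
    · simp only [Equiv.trans_apply, hLaM, Fin.val_cycleIcc_symm_apply_right hiL]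
      change m - 1 + 1 = m
      omega
    · have him : (i : ℕ) < m := hiL
      have hi : (⟨m - 1 - (m - 1 - i), by omega⟩ : Fin (Fintype.card X)) = i :=
        Fin.ext (show m - 1 - (m - 1 - i) = i by omega)
      ext z
      simp [unslide, hi]
  choose g hg using hsurj
  calc Nat.card (LinExtAt X a (m + 1)) ≤ Nat.card (LinExtAt X a m × Fin (tpar X a)) :=
        Nat.card_le_card_of_injective g fun L₁ L₂ h => Subtype.ext (by rw [← hg L₁, ← hg L₂, h])
    _ = tpar X a * Nat.card (LinExtAt X a m) := by rw [Nat.card_prod, Nat.card_fin, mul_comm]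

theorem tstar_eq_tpar_toDual (a : X) : tstar X a = tpar Xᵒᵈ (OrderDual.toDual a) := by
  have hU : ∀ y : Xᵒᵈ, Nat.card {z : Xᵒᵈ // ¬(z ≤ y ∨ y ≤ z) ∧ z ≤ OrderDual.toDual a} =
      Nat.card {z : X // ¬(z ≤ OrderDual.ofDual y ∨ OrderDual.ofDual y ≤ z) ∧ a ≤ z} := fun y =>
    Nat.card_congr <| OrderDual.ofDual.subtypeEquiv fun z => by
      simp [or_comm, OrderDual.le_toDual]
  simp only [tstar, tpar, hU, or_comm (a := _ ≤ a)]
  rfl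

theorem NE_toDual (a : X) (j : ℕ) :
    NE Xᵒᵈ (OrderDual.toDual a) j = NE X a (Fintype.card X + 1 - j) := by
  refine Nat.card_congr (Equiv.subtypeEquiv
    (OrderDual.ofDual.equivCongr (Fin.revPerm : Perm (Fin (Fintype.card X)))) fun L => ?_)
  have hrev : ((L (OrderDual.toDual a)).rev : ℕ) =
      Fintype.card X - (L (OrderDual.toDual a) + 1) := Fin.val_rev _
  have hlt : (L (OrderDual.toDual a) : ℕ) < Fintype.card X := (L _).isLt
  refine and_congr ⟨fun h p q hpq => Fin.rev_lt_rev.mpr (h _ _ hpq),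
    fun h p q hpq => Fin.rev_lt_rev.mp (h _ _ hpq)⟩ ?_
  change _ ↔ ((L (OrderDual.toDual a)).rev : ℕ) + 1 = _
  omega

end

theorem single_element_ratio_bounds_t_general (X : Type) [PartialOrder X] [Fintype X]
    (a : X) (k : ℕ) :
    (0 < NE X a (k - 1) → NE X a k ≤ tpar X a * NE X a (k - 1)) ∧
    (0 < NE X a (k + 1) → NE X a k ≤ tstar X a * NE X a (k + 1)) := by
  refine ⟨fun h => ?_, fun h => ?_⟩
  · rcases k with _ | k
    · simp [NE_zero]
    · exact NE_succ_le_tpar_mul a k h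
  · rcases le_or_gt k (Fintype.card X) with hk | hk
    · have hk₁ : Fintype.card X + 1 - (Fintype.card X - k) = k + 1 := by omega
      have hk₂ : Fintype.card X + 1 - (Fintype.card X - k + 1) = k := by omega
      have hdual := NE_succ_le_tpar_mul (OrderDual.toDual a) (Fintype.card X - k)
        (by rwa [NE_toDual, hk₁])
      rwa [NE_toDual, NE_toDual, ← tstar_eq_tpar_toDual, hk₁, hk₂] at hdual
    · simp [NE_eq_zero_of_card_lt a hk]

theorem single_element_ratio_bounds_t (X : Type) [PartialOrder X] [Fintype X]
    (a : X) (k : ℕ) (hk : 1 ≤ k) :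
    (0 < NE X a (k - 1) → NE X a k ≤ tpar X a * NE X a (k - 1)) ∧
    (0 < NE X a (k + 1) → NE X a k ≤ tstar X a * NE X a (k + 1)) :=
  single_element_ratio_bounds_t_general X a k
end
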